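/- Let A, B, C be pairwise disjoint finite sets and R ⊆ A×B, S ⊆ B×C, T ⊆ C×A; call a triple (a,b,c) with (a,b) ∈ R, (b,c) ∈ S, (c,a) ∈ T a triangle. Let a0, b0, c0 be fresh elements and consider the database instance with relations R ∪ {(a0,b0)}, S ∪ {(b0,c0)}, T ∪ {(c0,a0)}, all tuples endogenous, and the Boolean query h2* ⟵ R(x,y), S(y,z), T(z,x). Then a set Γ of tuples is a contingency set for the tuple (a0,b0) ∈ R if and only if Γ ⊆ R ∪ S ∪ T (i.e., Γ contains none of the three fresh tuples) and Γ contains at least one of the three tuples of every triangle. -/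

import Mathlib

/-- An atom of a Boolean conjunctive query: a relation symbol applied to a
tuple (list) of variables, marked endogenous (`endo = true`) or exogenous. -/
structure DBAtom (Rel Var : Type) where
  rel : Rel
  args : List Var
  endo : Bool
deriving DecidableEq

/-- A database tuple: it belongs to one relation and carries a tuple of constants. -/
structure DBTup (Rel Const : Type) where
  rel : Rel
  args : List Const
deriving DecidableEq

/-- The tuple obtained by applying a valuation `θ` to an atom. -/
def DBAtom.app {Rel Var Const : Type} (g : DBAtom Rel Var) (θ : Var → Const) :
    DBTup Rel Const :=
  ⟨g.rel, g.args.map θ⟩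

/-- `dbSat D q` holds iff `D ⊨ q`: there is a valuation `θ` of the variables of `q`
into the domain with `θ(g) ∈ D` for every atom `g` of `q`. -/
def dbSat {Rel Var Const : Type} (D : Finset (DBTup Rel Const))
    (q : Finset (DBAtom Rel Var)) : Prop :=
  ∃ θ : Var → Const, ∀ g ∈ q, g.app θ ∈ D

/-- `t` is an actual cause for `q` in `D` (with endogenous tuples `Dn`):
there is a contingency set `Γ ⊆ Dn` with `t ∉ Γ` such that
`D − Γ ⊨ q` and `D − Γ − {t} ⊭ q`. -/
def isActualCause {Rel Var Const : Type} [DecidableEq Rel] [DecidableEq Const]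
    (q : Finset (DBAtom Rel Var)) (D Dn : Finset (DBTup Rel Const))
    (t : DBTup Rel Const) : Prop :=
  ∃ Γ : Finset (DBTup Rel Const), Γ ⊆ Dn ∧ t ∉ Γ ∧
    dbSat (D \ Γ) q ∧ ¬ dbSat ((D \ Γ).erase t) q

/-- The n-lineage of `q` on `D`: the family of the sets `c^θ ∩ Dⁿ`
over all valuations `θ` with `θ(g) ∈ D` for all atoms `g` of `q`, where
`c^θ = {θ(g) : g an atom of q}`. -/
def nLineage {Rel Var Const : Type} [DecidableEq Rel] [DecidableEq Const]
    (q : Finset (DBAtom Rel Var)) (D Dn : Finset (DBTup Rel Const)) :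
    Set (Finset (DBTup Rel Const)) :=
  {c | ∃ θ : Var → Const, (∀ g ∈ q, g.app θ ∈ D) ∧
    c = (q.image fun g => g.app θ) ∩ Dn}

/-!
Since `b0 ∉ B` and `c0 ∉ C`, a valuation satisfying the query in the extended instance is either
the fresh triangle `(a0, b0, c0)` or a triangle of `R, S, T`, and the latter never uses the tuple
`(a0, b0)`. Hence `D − Γ − {(a0, b0)} ⊭ q` says exactly that `Γ` hits every triangle of
`R, S, T`; given that, `D − Γ ⊨ q` says that `Γ` spares the three fresh tuples, which for
`Γ ⊆ D` means `Γ ⊆ R ∪ S ∪ T`.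
-/

variable {V : Type}

def triangleQuery : Finset (DBAtom (Fin 3) (Fin 3)) :=
  {⟨0, [0, 1], true⟩, ⟨1, [1, 2], true⟩, ⟨2, [2, 0], true⟩}

def IsTriangle (R S T : Finset (V × V)) (a b c : V) : Prop :=
  (a, b) ∈ R ∧ (b, c) ∈ S ∧ (c, a) ∈ T

def HitsTriangle (Γ : Finset (DBTup (Fin 3) V)) (a b c : V) : Prop :=
  (⟨0, [a, b]⟩ : DBTup (Fin 3) V) ∈ Γ ∨ (⟨1, [b, c]⟩ : DBTup (Fin 3) V) ∈ Γ ∨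
    (⟨2, [c, a]⟩ : DBTup (Fin 3) V) ∈ Γ

theorem dbSat_triangleQuery_iff (X : Finset (DBTup (Fin 3) V)) :
    dbSat X triangleQuery ↔ ∃ a b c : V, (⟨0, [a, b]⟩ : DBTup (Fin 3) V) ∈ X ∧
      (⟨1, [b, c]⟩ : DBTup (Fin 3) V) ∈ X ∧ (⟨2, [c, a]⟩ : DBTup (Fin 3) V) ∈ X := by
  simp only [dbSat, triangleQuery, Finset.mem_insert, Finset.mem_singleton, forall_eq_or_imp,
    forall_eq, DBAtom.app, List.map_cons, List.map_nil]
  constructor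
  · rintro ⟨θ, hθ⟩
    exact ⟨θ 0, θ 1, θ 2, hθ⟩
  · rintro ⟨a, b, c, habc⟩
    exact ⟨![a, b, c], habc⟩

section

variable [DecidableEq V]

def triangleDB (R S T : Finset (V × V)) : Finset (DBTup (Fin 3) V) :=
  R.image (fun p => ⟨0, [p.1, p.2]⟩) ∪ S.image (fun p => ⟨1, [p.1, p.2]⟩) ∪
    T.image (fun p => ⟨2, [p.1, p.2]⟩)

variable {R S T : Finset (V × V)} {B C : Finset V} {a0 b0 c0 : V}

@[simp]
theorem mk_zero_mem_triangleDB {a b : V} :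
    (⟨0, [a, b]⟩ : DBTup (Fin 3) V) ∈ triangleDB R S T ↔ (a, b) ∈ R := by
  simp [triangleDB]

@[simp]
theorem mk_one_mem_triangleDB {a b : V} :
    (⟨1, [a, b]⟩ : DBTup (Fin 3) V) ∈ triangleDB R S T ↔ (a, b) ∈ S := by
  simp [triangleDB]

@[simp]
theorem mk_two_mem_triangleDB {a b : V} :
    (⟨2, [a, b]⟩ : DBTup (Fin 3) V) ∈ triangleDB R S T ↔ (a, b) ∈ T := by
  simp [triangleDB]

theorem triangleDB_insert (p q r : V × V) :
    triangleDB (insert p R) (insert q S) (insert r T) =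
      insert ⟨0, [p.1, p.2]⟩
        (insert ⟨1, [q.1, q.2]⟩ (insert ⟨2, [r.1, r.2]⟩ (triangleDB R S T))) := by
  ext u
  simp only [triangleDB, Finset.image_insert, Finset.mem_union, Finset.mem_insert]
  tauto

theorem dbSat_triangleDB_sdiff_iff (Γ : Finset (DBTup (Fin 3) V)) :
    dbSat (triangleDB R S T \ Γ) triangleQuery ↔
      ∃ a b c, IsTriangle R S T a b c ∧ ¬ HitsTriangle Γ a b c := by
  simp only [dbSat_triangleQuery_iff, Finset.mem_sdiff, mk_zero_mem_triangleDB,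
    mk_one_mem_triangleDB, mk_two_mem_triangleDB, IsTriangle, HitsTriangle, not_or]
  tauto

theorem hitsTriangle_insert_mk_zero {Γ : Finset (DBTup (Fin 3) V)} {x y a b c : V} :
    HitsTriangle (insert ⟨0, [x, y]⟩ Γ) a b c ↔ (a = x ∧ b = y) ∨ HitsTriangle Γ a b c := by
  simp [HitsTriangle, eq_comm, or_assoc]

theorem isTriangle_insert_iff {a b c : V}
    (hR : ∀ p ∈ R, p.2 ∈ B) (hS : ∀ p ∈ S, p.1 ∈ B ∧ p.2 ∈ C) (hb0 : b0 ∉ B) (hc0 : c0 ∉ C) :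
    IsTriangle (insert (a0, b0) R) (insert (b0, c0) S) (insert (c0, a0) T) a b c ↔
      (a = a0 ∧ b = b0 ∧ c = c0) ∨ IsTriangle R S T a b c := by
  simp only [IsTriangle, Finset.mem_insert, Prod.mk.injEq]
  constructor
  · rintro ⟨⟨rfl, rfl⟩ | hab, ⟨hb, rfl⟩ | hbc, hca⟩
    · exact Or.inl ⟨rfl, rfl, rfl⟩
    · exact absurd (hS _ hbc).1 hb0
    · exact absurd (hb ▸ hR _ hab) hb0
    · rcases hca with ⟨rfl, -⟩ | hca
      · exact absurd (hS _ hbc).2 hc0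
      · exact Or.inr ⟨hab, hbc, hca⟩
  · rintro (⟨rfl, rfl, rfl⟩ | ⟨hab, hbc, hca⟩)
    · simp
    · simp [hab, hbc, hca]

theorem subset_triangleDB_insert_and_not_hitsTriangle_iff {Γ : Finset (DBTup (Fin 3) V)}
    (hab0 : (a0, b0) ∉ R) (hbc0 : (b0, c0) ∉ S) (hca0 : (c0, a0) ∉ T) :
    Γ ⊆ triangleDB (insert (a0, b0) R) (insert (b0, c0) S) (insert (c0, a0) T) ∧
        ¬ HitsTriangle Γ a0 b0 c0 ↔ Γ ⊆ triangleDB R S T := by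
  rw [triangleDB_insert]
  constructor
  · rintro ⟨hΓ, hfresh⟩
    simp only [HitsTriangle, not_or] at hfresh
    rwa [Finset.subset_insert_iff_of_notMem hfresh.1, Finset.subset_insert_iff_of_notMem hfresh.2.1,
      Finset.subset_insert_iff_of_notMem hfresh.2.2] at hΓ
  · intro hΓ
    refine ⟨hΓ.trans ((Finset.subset_insert _ _).trans
      ((Finset.subset_insert _ _).trans (Finset.subset_insert _ _))), ?_⟩
    rintro (h | h | h)
    · exact hab0 (by simpa using hΓ h)
    · exact hbc0 (by simpa using hΓ h)
    · exact hca0 (by simpa using hΓ h)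

theorem dbSat_triangleDB_insert_sdiff_iff
    (hR : ∀ p ∈ R, p.2 ∈ B) (hS : ∀ p ∈ S, p.1 ∈ B ∧ p.2 ∈ C) (hb0 : b0 ∉ B) (hc0 : c0 ∉ C)
    (Γ : Finset (DBTup (Fin 3) V)) :
    dbSat (triangleDB (insert (a0, b0) R) (insert (b0, c0) S) (insert (c0, a0) T) \ Γ)
        triangleQuery ↔
      ¬ HitsTriangle Γ a0 b0 c0 ∨ ∃ a b c, IsTriangle R S T a b c ∧ ¬ HitsTriangle Γ a b c := by
  simp [dbSat_triangleDB_sdiff_iff, isTriangle_insert_iff hR hS hb0 hc0, or_and_right, exists_or]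

theorem not_dbSat_triangleDB_insert_sdiff_erase_iff
    (hR : ∀ p ∈ R, p.2 ∈ B) (hS : ∀ p ∈ S, p.1 ∈ B ∧ p.2 ∈ C) (hb0 : b0 ∉ B) (hc0 : c0 ∉ C)
    (Γ : Finset (DBTup (Fin 3) V)) :
    ¬ dbSat ((triangleDB (insert (a0, b0) R) (insert (b0, c0) S) (insert (c0, a0) T) \ Γ).erase
        ⟨0, [a0, b0]⟩) triangleQuery ↔
      ∀ a b c, IsTriangle R S T a b c → HitsTriangle Γ a b c := by
  rw [← Finset.sdiff_insert, dbSat_triangleDB_insert_sdiff_iff hR hS hb0 hc0]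
  have hreal : ∀ a b c, IsTriangle R S T a b c →
      (HitsTriangle (insert ⟨0, [a0, b0]⟩ Γ) a b c ↔ HitsTriangle Γ a b c) := by
    rintro a b c ⟨hab, -, -⟩
    rw [hitsTriangle_insert_mk_zero]
    refine or_iff_right ?_
    rintro ⟨-, rfl⟩
    exact hb0 (hR _ hab)
  have hfresh : HitsTriangle (insert ⟨0, [a0, b0]⟩ Γ) a0 b0 c0 :=
    hitsTriangle_insert_mk_zero.2 (Or.inl ⟨rfl, rfl⟩)
  simp only [hfresh, not_true_eq_false, false_or, not_exists, not_and, not_not]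
  exact forall₃_congr fun a b c => imp_congr_right (hreal a b c)

end

theorem statement12_general {V : Type} [DecidableEq V]
    (A B C : Finset V)
    (R S T : Finset (V × V))
    (hR : ∀ p ∈ R, p.1 ∈ A ∧ p.2 ∈ B)
    (hS : ∀ p ∈ S, p.1 ∈ B ∧ p.2 ∈ C)
    (hT : ∀ p ∈ T, p.1 ∈ C ∧ p.2 ∈ A)
    (a0 b0 c0 : V)
    (hb0 : b0 ∉ A ∪ B ∪ C) (hc0 : c0 ∉ A ∪ B ∪ C) :
    let q : Finset (DBAtom (Fin 3) (Fin 3)) :=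
      {⟨0, [0, 1], true⟩, ⟨1, [1, 2], true⟩, ⟨2, [2, 0], true⟩}
    let D : Finset (DBTup (Fin 3) V) :=
      (insert (a0, b0) R).image (fun p => ⟨0, [p.1, p.2]⟩) ∪
      (insert (b0, c0) S).image (fun p => ⟨1, [p.1, p.2]⟩) ∪
      (insert (c0, a0) T).image (fun p => ⟨2, [p.1, p.2]⟩)
    let t0 : DBTup (Fin 3) V := ⟨0, [a0, b0]⟩
    ∀ Γ : Finset (DBTup (Fin 3) V),
      (Γ ⊆ D ∧ t0 ∉ Γ ∧ dbSat (D \ Γ) q ∧ ¬ dbSat ((D \ Γ).erase t0) q) ↔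
      (Γ ⊆ R.image (fun p => ⟨0, [p.1, p.2]⟩) ∪ S.image (fun p => ⟨1, [p.1, p.2]⟩) ∪
           T.image (fun p => ⟨2, [p.1, p.2]⟩) ∧
        ∀ a b c : V, (a, b) ∈ R → (b, c) ∈ S → (c, a) ∈ T →
          ((⟨0, [a, b]⟩ : DBTup (Fin 3) V) ∈ Γ ∨
           (⟨1, [b, c]⟩ : DBTup (Fin 3) V) ∈ Γ ∨
           (⟨2, [c, a]⟩ : DBTup (Fin 3) V) ∈ Γ)) := by
  intro q D t0 Γ
  have hb0B : b0 ∉ B := fun h => hb0 (by simp [h])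
  have hc0C : c0 ∉ C := fun h => hc0 (by simp [h])
  have hRB : ∀ p ∈ R, p.2 ∈ B := fun p hp => (hR p hp).2
  have hsat := dbSat_triangleDB_insert_sdiff_iff (T := T) (a0 := a0) hRB hS hb0B hc0C Γ
  have hcut := not_dbSat_triangleDB_insert_sdiff_erase_iff (T := T) (a0 := a0) hRB hS hb0B hc0C Γ
  have hsub := subset_triangleDB_insert_and_not_hitsTriangle_iff (Γ := Γ) (a0 := a0)
    (fun h => hb0B (hRB _ h)) (fun h => hb0B (hS _ h).1) (fun h => hc0C (hT _ h).1)
  change Γ ⊆ triangleDB _ _ _ ∧ ⟨0, [a0, b0]⟩ ∉ Γ ∧ dbSat (triangleDB _ _ _ \ Γ) triangleQuery ∧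
    ¬ dbSat ((triangleDB _ _ _ \ Γ).erase ⟨0, [a0, b0]⟩) triangleQuery ↔ Γ ⊆ triangleDB R S T ∧ _
  rw [hsat, hcut, ← hsub]
  constructor
  · rintro ⟨hΓ, -, hfresh | ⟨a, b, c, habc, hmiss⟩, hhit⟩
    · exact ⟨⟨hΓ, hfresh⟩, fun a b c hab hbc hca => hhit a b c ⟨hab, hbc, hca⟩⟩
    · exact absurd (hhit a b c habc) hmiss
  · rintro ⟨⟨hΓ, hfresh⟩, hhit⟩
    exact ⟨hΓ, fun h => hfresh (Or.inl h), Or.inl hfresh,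
      fun a b c ⟨hab, hbc, hca⟩ => hhit a b c hab hbc hca⟩

/-- Let `A, B, C` be pairwise disjoint finite sets,
`R ⊆ A×B`, `S ⊆ B×C`, `T ⊆ C×A`; a triple `(a,b,c)` with `(a,b) ∈ R`, `(b,c) ∈ S`,
`(c,a) ∈ T` is a triangle. Let `a0, b0, c0` be fresh elements and consider the database
instance with relations `R ∪ {(a0,b0)}`, `S ∪ {(b0,c0)}`, `T ∪ {(c0,a0)}` (symbols
`R,S,T` are `0,1,2`), all tuples endogenous, and the query
`h2* ⟵ R(x,y), S(y,z), T(z,x)` (variables `x,y,z` are `0,1,2`). Then `Γ` is a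
contingency set for the tuple `(a0,b0) ∈ R` iff `Γ ⊆ R ∪ S ∪ T` (i.e. `Γ` contains none
of the three fresh tuples) and `Γ` contains at least one of the three tuples of every
triangle. -/
theorem statement12 {V : Type} [DecidableEq V]
    (A B C : Finset V)
    (hAB : Disjoint A B) (hAC : Disjoint A C) (hBC : Disjoint B C)
    (R S T : Finset (V × V))
    (hR : ∀ p ∈ R, p.1 ∈ A ∧ p.2 ∈ B)
    (hS : ∀ p ∈ S, p.1 ∈ B ∧ p.2 ∈ C)
    (hT : ∀ p ∈ T, p.1 ∈ C ∧ p.2 ∈ A)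
    (a0 b0 c0 : V)
    (ha0 : a0 ∉ A ∪ B ∪ C) (hb0 : b0 ∉ A ∪ B ∪ C) (hc0 : c0 ∉ A ∪ B ∪ C) :
    let q : Finset (DBAtom (Fin 3) (Fin 3)) :=
      {⟨0, [0, 1], true⟩, ⟨1, [1, 2], true⟩, ⟨2, [2, 0], true⟩}
    let D : Finset (DBTup (Fin 3) V) :=
      (insert (a0, b0) R).image (fun p => ⟨0, [p.1, p.2]⟩) ∪
      (insert (b0, c0) S).image (fun p => ⟨1, [p.1, p.2]⟩) ∪
      (insert (c0, a0) T).image (fun p => ⟨2, [p.1, p.2]⟩)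
    let t0 : DBTup (Fin 3) V := ⟨0, [a0, b0]⟩
    ∀ Γ : Finset (DBTup (Fin 3) V),
      (Γ ⊆ D ∧ t0 ∉ Γ ∧ dbSat (D \ Γ) q ∧ ¬ dbSat ((D \ Γ).erase t0) q) ↔
      (Γ ⊆ R.image (fun p => ⟨0, [p.1, p.2]⟩) ∪ S.image (fun p => ⟨1, [p.1, p.2]⟩) ∪
           T.image (fun p => ⟨2, [p.1, p.2]⟩) ∧
        ∀ a b c : V, (a, b) ∈ R → (b, c) ∈ S → (c, a) ∈ T →
          ((⟨0, [a, b]⟩ : DBTup (Fin 3) V) ∈ Γ ∨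
           (⟨1, [b, c]⟩ : DBTup (Fin 3) V) ∈ Γ ∨
           (⟨2, [c, a]⟩ : DBTup (Fin 3) V) ∈ Γ)) :=
  statement12_general A B C R S T hR hS hT a0 b0 c0 hb0 hc0
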